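/- Let μ be an invertible 2×2 complex matrix, let S be a symmetric invertible 2×2 complex matrix, and let ξ ∈ ℂ be such that μᵀ·S·μ = ξ·det(μ)·S. Then ξ² = 1, and setting A₀ = w·S·diag(−1,1), A₀' = −w·A₀ᵀ·w, and μ' = w·(μᵀ)⁻¹·w, one has μ'·A₀·(μ')⁻¹ = ξ·A₀ and μ·A₀'·μ⁻¹ = ξ·A₀'. -/

import Mathlib

/-!
With `J = [[0,-1],[1,0]]`, every 2×2 matrix satisfies `μ J μᵀ = det μ · J`. Combined with
`μᵀ S μ = ξ det μ · S` this gives `μ (J S) = ξ · (J S) μ`, i.e. `μ` scales `A₀' = J S` by `ξ`;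
transposing (`S` symmetric, `J` skew) shows that `(μᵀ)⁻¹` scales `S J` by `ξ`, and conjugating by
the involution `w` turns this into the statement about `A₀ = w (S J) w` and `μ'`.
Taking determinants in the hypothesis gives `ξ² = 1`.
-/

open Matrix

def w2 : Matrix (Fin 2) (Fin 2) ℂ := !![0,1; 1,0]

namespace Matrix

variable {R : Type*} [CommRing R]

def J2 : Matrix (Fin 2) (Fin 2) R := !![0, -1; 1, 0]

theorem J2_transpose : (J2 : Matrix (Fin 2) (Fin 2) R)ᵀ = -J2 := by
  ext i j; fin_cases i <;> fin_cases j <;> simp [J2]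

theorem mul_J2_mul_transpose (μ : Matrix (Fin 2) (Fin 2) R) : μ * J2 * μᵀ = μ.det • J2 := by
  ext i j; fin_cases i <;> fin_cases j <;>
    simp [J2, mul_apply, Fin.sum_univ_two, det_fin_two] <;> ring

theorem mul_J2_eq_smul {μ : Matrix (Fin 2) (Fin 2) R} (hμ : IsUnit μ.det) :
    μ * J2 = μ.det • (J2 * μᵀ⁻¹) := by
  have hμT : IsUnit μᵀ.det := by rwa [det_transpose]
  rw [← smul_mul, ← mul_J2_mul_transpose, mul_nonsing_inv_cancel_right _ _ hμT]

theorem sq_eq_one_of_transpose_mul_mul_eq_smul {μ S : Matrix (Fin 2) (Fin 2) R} {ξ : R}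
    (hμ : IsUnit μ.det) (hS : IsUnit S.det) (hξ : μᵀ * S * μ = (ξ * μ.det) • S) : ξ ^ 2 = 1 := by
  have hdet := congrArg det hξ
  rw [det_mul, det_mul, det_transpose, det_smul, Fintype.card_fin] at hdet
  refine ((hμ.mul hμ).mul hS).mul_right_cancel ?_
  linear_combination -hdet

section Conjugation

variable {n : Type*} [Fintype n] [DecidableEq n] {μ A : Matrix n n R} {ξ : R}

theorem mul_mul_inv_eq_smul_of_mul_eq_smul_mul (hμ : IsUnit μ.det) (h : μ * A = ξ • (A * μ)) :
    μ * A * μ⁻¹ = ξ • A := by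
  rw [h, smul_mul, mul_nonsing_inv_cancel_right _ _ hμ]

theorem transpose_inv_mul_eq_smul_mul_of_mul_eq_smul_mul (hμ : IsUnit μ.det)
    (h : μ * A = ξ • (A * μ)) : μᵀ⁻¹ * Aᵀ = ξ • (Aᵀ * μᵀ⁻¹) := by
  have hμT : IsUnit μᵀ.det := by rwa [det_transpose]
  have hT : Aᵀ * μᵀ = ξ • (μᵀ * Aᵀ) := by
    simpa only [transpose_mul, transpose_smul] using congrArg transpose h
  calc μᵀ⁻¹ * Aᵀ = μᵀ⁻¹ * (Aᵀ * μᵀ) * μᵀ⁻¹ := by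
        rw [← Matrix.mul_assoc, mul_nonsing_inv_cancel_right _ _ hμT]
    _ = ξ • (Aᵀ * μᵀ⁻¹) := by
        rw [hT, Matrix.mul_smul, smul_mul, ← Matrix.mul_assoc, nonsing_inv_mul _ hμT,
          Matrix.one_mul]

end Conjugation

theorem mul_J2_mul_eq_smul {μ S : Matrix (Fin 2) (Fin 2) R} {ξ : R} (hμ : IsUnit μ.det)
    (hξ : μᵀ * S * μ = (ξ * μ.det) • S) (hξ2 : ξ ^ 2 = 1) :
    μ * (J2 * S) = ξ • (J2 * S * μ) := by
  have hμT : IsUnit μᵀ.det := by rwa [det_transpose]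
  calc μ * (J2 * S) = μ.det • (J2 * μᵀ⁻¹ * S) := by
        rw [← Matrix.mul_assoc, mul_J2_eq_smul hμ, smul_mul]
    _ = (ξ ^ 2 * μ.det) • (J2 * μᵀ⁻¹ * S) := by rw [hξ2, one_mul]
    _ = ξ • (J2 * μᵀ⁻¹ * (μᵀ * S * μ)) := by
        rw [hξ, Matrix.mul_smul, smul_smul, ← mul_assoc, ← sq]
    _ = ξ • (J2 * S * μ) := by
        simp only [Matrix.mul_assoc, nonsing_inv_mul_cancel_left _ _ hμT]

end Matrix

theorem w2_mul_w2 : w2 * w2 = 1 := by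
  ext i j; fin_cases i <;> fin_cases j <;> simp [w2, mul_apply, Fin.sum_univ_two]

theorem w2_mul_w2_mul (A : Matrix (Fin 2) (Fin 2) ℂ) : w2 * (w2 * A) = A := by
  rw [← Matrix.mul_assoc, w2_mul_w2, Matrix.one_mul]

theorem w2_transpose : w2ᵀ = w2 := by
  ext i j; fin_cases i <;> fin_cases j <;> simp [w2]

theorem w2_inv : w2⁻¹ = w2 := inv_eq_left_inv w2_mul_w2

theorem diag_neg_one_one_eq_J2_mul_w2 : !![(-1 : ℂ), 0; 0, 1] = J2 * w2 := by
  ext i j; fin_cases i <;> fin_cases j <;> simp [w2, J2, mul_apply, Fin.sum_univ_two]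

theorem w2_conj_mul_mul_inv (B A : Matrix (Fin 2) (Fin 2) ℂ) :
    w2 * B * w2 * (w2 * A * w2) * (w2 * B * w2)⁻¹ = w2 * (B * A * B⁻¹) * w2 := by
  simp only [Matrix.mul_inv_rev, w2_inv, Matrix.mul_assoc, w2_mul_w2_mul]

/-- If `μᵀ·S·μ = ξ·det(μ)·S` with `μ` invertible and `S` symmetric invertible,
then `ξ² = 1` and conjugation by `μ' = w·(μᵀ)⁻¹·w` (resp. `μ`) scales
`A₀ = w·S·diag(−1,1)` (resp. `A₀' = −w·A₀ᵀ·w`) by `ξ`. -/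
theorem stmt19 (μ : Matrix (Fin 2) (Fin 2) ℂ) (hμ : IsUnit μ.det)
    (S : Matrix (Fin 2) (Fin 2) ℂ) (hS : Sᵀ = S) (hS' : IsUnit S.det)
    (ξ : ℂ) (hξ : μᵀ * S * μ = (ξ * μ.det) • S) :
    let A₀ : Matrix (Fin 2) (Fin 2) ℂ := w2 * S * !![(-1 : ℂ), 0; 0, 1]
    let A₀' : Matrix (Fin 2) (Fin 2) ℂ := -(w2 * A₀ᵀ * w2)
    let μ' : Matrix (Fin 2) (Fin 2) ℂ := w2 * (μᵀ)⁻¹ * w2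
    ξ ^ 2 = 1 ∧ μ' * A₀ * μ'⁻¹ = ξ • A₀ ∧ μ * A₀' * μ⁻¹ = ξ • A₀' := by
  intro A₀ A₀' μ'
  set B := J2 * S
  have hξ2 : ξ ^ 2 = 1 := sq_eq_one_of_transpose_mul_mul_eq_smul hμ hS' hξ
  have hμB : μ * B = ξ • (B * μ) := mul_J2_mul_eq_smul hμ hξ hξ2
  have hA₀ : A₀ = -(w2 * Bᵀ * w2) := by
    simp only [A₀, B, transpose_mul, hS, J2_transpose, diag_neg_one_one_eq_J2_mul_w2,
      Matrix.mul_neg, Matrix.neg_mul, neg_neg, Matrix.mul_assoc]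
  have hA₀' : A₀' = B := by
    simp only [A₀', hA₀, transpose_neg, transpose_mul, w2_transpose, transpose_transpose,
      Matrix.mul_neg, Matrix.neg_mul, neg_neg, Matrix.mul_assoc, w2_mul_w2_mul, w2_mul_w2,
      Matrix.mul_one]
  have hμT : IsUnit μᵀ⁻¹.det := by rw [det_nonsing_inv]; simpa [det_transpose] using hμ
  have hBT : μᵀ⁻¹ * Bᵀ * μᵀ⁻¹⁻¹ = ξ • Bᵀ :=
    mul_mul_inv_eq_smul_of_mul_eq_smul_mul hμT
      (transpose_inv_mul_eq_smul_mul_of_mul_eq_smul_mul hμ hμB)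
  refine ⟨hξ2, ?_, ?_⟩
  · rw [hA₀, Matrix.mul_neg, Matrix.neg_mul, w2_conj_mul_mul_inv, hBT, Matrix.mul_smul, smul_mul,
      smul_neg]
  · rw [hA₀']
    exact mul_mul_inv_eq_smul_of_mul_eq_smul_mul hμ hμB
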